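/- The function V₀ : S^M → [0,∞), defined as the pointwise limit V₀(π)=lim_{N→∞}(𝕄^N h)(π), is continuous on S^M (including the boundary of the simplex). -/

import Mathlib

open MeasureTheory Finset Filter
open scoped ENNReal

noncomputable section

/-- The analytic data of the change-diagnosis problem: a σ-finite reference measure `m`
on the observation space, probability densities `f₀, …, f_M`, the geometric parameter
`p ∈ (0,1)`, the prior `ν` on the change index, the delay cost `c > 0` and the
terminal-decision costs `a_{ij}` (with `a_{ii} = 0`). -/
structure DiagSetup (E : Type*) [MeasurableSpace E] (M : ℕ) : Type _ where
  /-- σ-finite reference measure -/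
  m : Measure E
  hm : SigmaFinite m
  /-- `f 0` is the pre-change density, `f i.succ` the post-change densities -/
  f : Fin (M + 1) → E → ℝ
  hf_meas : ∀ i, Measurable (f i)
  hf_nonneg : ∀ i x, 0 ≤ f i x
  hf_int : ∀ i, ∫ x, f i x ∂m = 1
  p : ℝ
  hp : p ∈ Set.Ioo (0 : ℝ) 1
  ν : Fin M → ℝ
  hν : ∀ i, 0 < ν i
  hνsum : ∑ i, ν i = 1
  c : ℝ
  hc : 0 < c
  a : Fin (M + 1) → Fin M → ℝ
  ha : ∀ i j, 0 ≤ a i j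
  haii : ∀ i : Fin M, a i.succ i = 0
  hM : 1 ≤ M

namespace DiagSetup

variable {E : Type*} [MeasurableSpace E] {M : ℕ}

/-- `D_i(π, x)`:  `D₀(π,x) = (1-p)π₀f₀(x)` and `D_i(π,x) = (π_i + π₀ p ν_i) f_i(x)`. -/
def D (S : DiagSetup E M) (i : Fin (M + 1)) (π : Fin (M + 1) → ℝ) (x : E) : ℝ :=
  Fin.cases ((1 - S.p) * π 0 * S.f 0 x)
    (fun j => (π j.succ + π 0 * S.p * S.ν j) * S.f j.succ x) i

/-- `D(π, x) = Σ_{i=0}^M D_i(π, x)`. -/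
def Dsum (S : DiagSetup E M) (π : Fin (M + 1) → ℝ) (x : E) : ℝ :=
  ∑ i, S.D i π x

/-- The operator `T`:
`(Tg)(π) = ∫_E D(π,x) g(D₀(π,x)/D(π,x), …, D_M(π,x)/D(π,x)) m(dx)`,
with the integrand interpreted as `0` where `D(π,x) = 0`. -/
def T (S : DiagSetup E M) (g : (Fin (M + 1) → ℝ) → ℝ) (π : Fin (M + 1) → ℝ) : ℝ :=
  ∫ x, (if S.Dsum π x = 0 then 0
        else S.Dsum π x * g fun i => S.D i π x / S.Dsum π x) ∂S.m

/-- `h_j(π) = Σ_{i=0}^M π_i a_{ij}`. -/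
def hj (S : DiagSetup E M) (j : Fin M) (π : Fin (M + 1) → ℝ) : ℝ :=
  ∑ i : Fin (M + 1), π i * S.a i j

/-- `h(π) = min_{j∈{1,…,M}} h_j(π)`. -/
def hmin (S : DiagSetup E M) (π : Fin (M + 1) → ℝ) : ℝ :=
  ⨅ j : Fin M, S.hj j π

/-- The dynamic-programming operator `(𝕄g)(π) = min{h(π), c(1-π₀) + (Tg)(π)}`. -/
def Mop (S : DiagSetup E M) (g : (Fin (M + 1) → ℝ) → ℝ) (π : Fin (M + 1) → ℝ) : ℝ :=
  min (S.hmin π) (S.c * (1 - π 0) + S.T g π)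

/-- `V^N = 𝕄^N h`, the value functions of the truncated problems. -/
def V (S : DiagSetup E M) (N : ℕ) : (Fin (M + 1) → ℝ) → ℝ :=
  S.Mop^[N] S.hmin

end DiagSetup

/-!
Each `V^N` is continuous, concave and nonnegative on the simplex, because `𝕄` preserves these
properties: `T g` integrates the perspective `u ↦ (∑ u) g(u / ∑ u)` of `g` along the linear map
`π ↦ D(π, x)`, so it is continuous by dominated convergence and concave because perspectives of
concave functions are concave. The `V^N` decrease, so `V₀` is an infimum of continuous functions,
hence upper semicontinuous; and it is concave and nonnegative on a simplex, hence lower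
semicontinuous, since near any point `x` the simplex lies in its image under a homothety of small
ratio centred at `x`.
-/

open Topology

section Perspective

variable {ι : Type*} [Fintype ι]

def perspective (g : (ι → ℝ) → ℝ) (u : ι → ℝ) : ℝ :=
  if ∑ i, u i = 0 then 0 else (∑ i, u i) * g fun i => u i / ∑ j, u j

lemma div_sum_mem_stdSimplex {u : ι → ℝ} (hu : 0 ≤ u) (h : ∑ i, u i ≠ 0) :
    (fun i => u i / ∑ j, u j) ∈ stdSimplex ℝ ι :=
  ⟨fun i => div_nonneg (hu i) (sum_nonneg fun j _ => hu j), by rw [← sum_div, div_self h]⟩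

lemma perspective_nonneg {g : (ι → ℝ) → ℝ} (hg : ∀ π ∈ stdSimplex ℝ ι, 0 ≤ g π)
    {u : ι → ℝ} (hu : 0 ≤ u) : 0 ≤ perspective g u := by
  unfold perspective
  split_ifs with h
  · rfl
  · exact mul_nonneg (sum_nonneg fun i _ => hu i) (hg _ (div_sum_mem_stdSimplex hu h))

lemma perspective_mono {g₁ g₂ : (ι → ℝ) → ℝ} (hg : ∀ π ∈ stdSimplex ℝ ι, g₁ π ≤ g₂ π)
    {u : ι → ℝ} (hu : 0 ≤ u) : perspective g₁ u ≤ perspective g₂ u := by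
  unfold perspective
  split_ifs with h
  · rfl
  · exact mul_le_mul_of_nonneg_left (hg _ (div_sum_mem_stdSimplex hu h))
      (sum_nonneg fun i _ => hu i)

lemma norm_perspective_le {g : (ι → ℝ) → ℝ} {C : ℝ} (hg : ∀ π ∈ stdSimplex ℝ ι, ‖g π‖ ≤ C)
    {u : ι → ℝ} (hu : 0 ≤ u) : ‖perspective g u‖ ≤ C * ∑ i, u i := by
  unfold perspective
  split_ifs with h
  · simp [h]
  · rw [norm_mul, Real.norm_of_nonneg (sum_nonneg fun i _ => hu i), mul_comm]
    exact mul_le_mul_of_nonneg_right (hg _ (div_sum_mem_stdSimplex hu h))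
      (sum_nonneg fun i _ => hu i)

lemma perspective_smul (g : (ι → ℝ) → ℝ) {c : ℝ} (hc : 0 ≤ c) (u : ι → ℝ) :
    perspective g (c • u) = c * perspective g u := by
  rcases hc.eq_or_lt with rfl | hc
  · simp [perspective]
  simp only [perspective, Pi.smul_apply, smul_eq_mul, ← mul_sum, mul_eq_zero, hc.ne',
    false_or]
  split_ifs
  · simp
  · simp only [mul_div_mul_left _ _ hc.ne', mul_assoc]

lemma perspective_add_perspective_le {g : (ι → ℝ) → ℝ} (hg : ConcaveOn ℝ (stdSimplex ℝ ι) g)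
    {u v : ι → ℝ} (hu : 0 ≤ u) (hv : 0 ≤ v) :
    perspective g u + perspective g v ≤ perspective g (u + v) := by
  have eq_zero : ∀ {w : ι → ℝ}, 0 ≤ w → ∑ i, w i = 0 → w = 0 := fun hw h =>
    funext fun i => (sum_eq_zero_iff_of_nonneg fun i _ => hw i).1 h i (mem_univ i)
  by_cases hs : ∑ i, u i = 0
  · simp [perspective, eq_zero hu hs]
  by_cases hr : ∑ i, v i = 0
  · simp [perspective, eq_zero hv hr]
  rw [perspective, perspective, perspective, if_neg hs, if_neg hr, Pi.add_def, sum_add_distrib,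
    if_neg (add_pos ((sum_nonneg fun i _ => hu i).lt_of_ne' hs)
      ((sum_nonneg fun i _ => hv i).lt_of_ne' hr)).ne']
  set s := ∑ i, u i
  set r := ∑ i, v i
  have hs₀ : 0 < s := (sum_nonneg fun i _ => hu i).lt_of_ne' hs
  have hr₀ : 0 < r := (sum_nonneg fun i _ => hv i).lt_of_ne' hr
  have hmix : (fun i => (u i + v i) / (s + r)) =
      (s / (s + r)) • (fun i => u i / s) + (r / (s + r)) • fun i => v i / r := by
    funext i
    simp only [Pi.add_apply, Pi.smul_apply, smul_eq_mul]
    field_simp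
  have hconc : s / (s + r) * g (fun i => u i / s) + r / (s + r) * g (fun i => v i / r) ≤
      g fun i => (u i + v i) / (s + r) := by
    rw [hmix]
    exact hg.2 (div_sum_mem_stdSimplex hu hs) (div_sum_mem_stdSimplex hv hr) (by positivity)
      (by positivity) (by field_simp)
  calc s * g (fun i => u i / s) + r * g (fun i => v i / r)
      = (s + r) * (s / (s + r) * g (fun i => u i / s) + r / (s + r) * g fun i => v i / r) := by
        field_simp
    _ ≤ _ := mul_le_mul_of_nonneg_left hconc (add_pos hs₀ hr₀).le

lemma concaveOn_perspective {g : (ι → ℝ) → ℝ} (hg : ConcaveOn ℝ (stdSimplex ℝ ι) g) :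
    ConcaveOn ℝ (Set.Ici 0) (perspective g) := by
  refine ⟨convex_Ici 0, fun u hu v hv a b ha hb hab => ?_⟩
  rw [smul_eq_mul, smul_eq_mul, ← perspective_smul g ha, ← perspective_smul g hb]
  exact perspective_add_perspective_le hg (smul_nonneg ha hu) (smul_nonneg hb hv)

lemma continuousOn_perspective {g : (ι → ℝ) → ℝ} (hg : ContinuousOn g (stdSimplex ℝ ι)) :
    ContinuousOn (perspective g) (Set.Ici 0) := by
  have hsum : Continuous fun v : ι → ℝ => ∑ i, v i := by fun_prop
  intro u hu
  by_cases h : ∑ i, u i = 0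
  · obtain ⟨C, hC⟩ := (isCompact_stdSimplex ℝ ι).exists_bound_of_continuousOn hg
    have hbound : Tendsto (fun v : ι → ℝ => C * ∑ i, v i) (𝓝[Set.Ici 0] u) (𝓝 0) := by
      simpa [h] using ((hsum.tendsto u).const_mul C).mono_left nhdsWithin_le_nhds
    rw [ContinuousWithinAt, show perspective g u = 0 from if_pos h]
    exact squeeze_zero_norm'
      (eventually_nhdsWithin_of_forall fun v hv => norm_perspective_le hC hv) hbound
  · rw [← continuousWithinAt_inter' (hsum.continuousWithinAt.eventually_ne h)]
    have hnormalize : ContinuousAt (fun v : ι → ℝ => fun i => v i / ∑ j, v j) u :=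
      continuousAt_pi.2 fun i => (continuous_apply i).continuousAt.div hsum.continuousAt h
    refine ContinuousWithinAt.congr ?_ (fun v hv => if_neg hv.2) (if_neg h)
    exact hsum.continuousWithinAt.mul ((hg _ (div_sum_mem_stdSimplex hu h)).comp
      hnormalize.continuousWithinAt fun v hv => div_sum_mem_stdSimplex hv.1 hv.2)

end Perspective

/-- This is where the simplex being a polytope matters: on a general compact convex set a
bounded concave function need not be lower semicontinuous at the boundary. -/
lemma homothety_image_stdSimplex_mem_nhdsWithin {ι : Type*} [Fintype ι] {x : ι → ℝ}
    (hx : x ∈ stdSimplex ℝ ι) {t : ℝ} (ht : 0 < t) :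
    AffineMap.homothety x t '' stdSimplex ℝ ι ∈ 𝓝[stdSimplex ℝ ι] x := by
  have hpre : ∀ᶠ y in 𝓝[stdSimplex ℝ ι] x, ∀ i, 0 ≤ x i + t⁻¹ * (y i - x i) := by
    refine eventually_all.2 fun i => ?_
    rcases (hx.1 i).eq_or_lt with h | h
    · exact eventually_nhdsWithin_of_forall fun y hy => by
        rw [← h, zero_add, sub_zero]; exact mul_nonneg (inv_nonneg.2 ht.le) (hy.1 i)
    · have hcont : Continuous fun y : ι → ℝ => x i + t⁻¹ * (y i - x i) := by fun_prop
      refine nhdsWithin_le_nhds ((continuousAt_const.eventually_lt hcont.continuousAt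
        (by simpa using h)).mono fun _ => le_of_lt)
  filter_upwards [hpre, self_mem_nhdsWithin] with y hy hys
  refine ⟨x + t⁻¹ • (y - x), ⟨hy, ?_⟩, ?_⟩
  · simp [sum_add_distrib, ← mul_sum, hx.2, hys.2]
  · simp [AffineMap.homothety_apply, smul_smul, ht.ne']

lemma ConcaveOn.lowerSemicontinuousWithinAt_stdSimplex {ι : Type*} [Fintype ι]
    {f : (ι → ℝ) → ℝ} (hf : ConcaveOn ℝ (stdSimplex ℝ ι) f) {m : ℝ}
    (hm : ∀ y ∈ stdSimplex ℝ ι, m ≤ f y) {x : ι → ℝ} (hx : x ∈ stdSimplex ℝ ι) :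
    LowerSemicontinuousWithinAt f (stdSimplex ℝ ι) x := by
  intro b hb
  have hsmall : ∀ᶠ t in 𝓝 (0 : ℝ), t * (f x - m) < f x - b ∧ t ≤ 1 := by
    have : Tendsto (fun t : ℝ => t * (f x - m)) (𝓝 0) (𝓝 0) := by
      simpa using (continuous_id.mul_const (f x - m)).tendsto (0 : ℝ)
    exact (this.eventually (gt_mem_nhds (sub_pos.2 hb))).and (Iic_mem_nhds one_pos)
  obtain ⟨t, ⟨htb, ht1⟩, ht0⟩ :=
    ((hsmall.filter_mono nhdsWithin_le_nhds).and (self_mem_nhdsWithin (s := Set.Ioi 0))).exists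
  filter_upwards [homothety_image_stdSimplex_mem_nhdsWithin hx ht0] with y hy
  obtain ⟨z, hz, rfl⟩ := hy
  calc b < (1 - t) * f x + t * m := by linarith
    _ ≤ (1 - t) * f x + t * f z := by gcongr; exact hm z hz
    _ ≤ f ((1 - t) • x + t • z) := hf.2 hx hz (sub_nonneg.2 ht1) ht0.le (by ring)
    _ = f (AffineMap.homothety x t z) := by
        rw [AffineMap.homothety_apply]; congr 1; simp only [vsub_eq_sub, vadd_eq_add]; module

lemma upperSemicontinuousWithinAt_of_tendsto_of_le {α ι γ : Type*} [TopologicalSpace α]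
    [LinearOrder γ] [TopologicalSpace γ] [OrderTopology γ] {l : Filter ι} {g : ι → α → γ}
    {f : α → γ} {s : Set α} {x : α} (hg : ∀ n, UpperSemicontinuousWithinAt (g n) s x)
    (hle : ∀ n, ∀ y ∈ s, f y ≤ g n y) (hlim : Tendsto (fun n => g n x) l (𝓝 (f x)))
    [l.NeBot] : UpperSemicontinuousWithinAt f s x := by
  intro b hb
  obtain ⟨n, hn⟩ := (hlim.eventually (gt_mem_nhds hb)).exists
  filter_upwards [hg n b hn, self_mem_nhdsWithin] with y hy hys
  exact (hle n y hys).trans_lt hy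

lemma concaveOn_of_tendsto {E ι : Type*} [AddCommGroup E] [Module ℝ E] {l : Filter ι} [l.NeBot]
    {F : ι → E → ℝ} {f : E → ℝ} {s : Set E} (hF : ∀ n, ConcaveOn ℝ s (F n))
    (hlim : ∀ x ∈ s, Tendsto (fun n => F n x) l (𝓝 (f x))) : ConcaveOn ℝ s f := by
  obtain ⟨n⟩ := l.nonempty_of_neBot
  refine ⟨(hF n).1, fun x hx y hy a b ha hb hab => ?_⟩
  exact le_of_tendsto_of_tendsto' (((hlim x hx).const_smul a).add ((hlim y hy).const_smul b))
    (hlim _ ((hF n).1 hx hy ha hb hab)) fun n => (hF n).2 hx hy ha hb hab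

lemma concaveOn_integral {α β : Type*} [MeasurableSpace α] {μ : Measure α} [AddCommGroup β]
    [Module ℝ β] {s : Set β} {F : β → α → ℝ} (hs : Convex ℝ s)
    (hF : ∀ᵐ x ∂μ, ConcaveOn ℝ s (F · x)) (hint : ∀ y ∈ s, Integrable (F y) μ) :
    ConcaveOn ℝ s fun y => ∫ x, F y x ∂μ := by
  refine ⟨hs, fun y hy y' hy' a b ha hb hab => ?_⟩
  simp only [smul_eq_mul]
  rw [← integral_const_mul, ← integral_const_mul,
    ← integral_add ((hint y hy).const_mul a) ((hint y' hy').const_mul b)]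
  exact integral_mono_ae (((hint y hy).const_mul a).add ((hint y' hy').const_mul b))
    (hint _ (hs hy hy' ha hb hab)) (hF.mono fun x hx => hx.2 hy hy' ha hb hab)

namespace DiagSetup

variable {E : Type*} [MeasurableSpace E] {M : ℕ} (S : DiagSetup E M)

local notation "Δ" => stdSimplex ℝ (Fin (M + 1))

def Dlin (x : E) : (Fin (M + 1) → ℝ) →ₗ[ℝ] Fin (M + 1) → ℝ where
  toFun π i := S.D i π x
  map_add' π π' := by ext i; cases i using Fin.cases <;> simp [D] <;> ring
  map_smul' c π := by ext i; cases i using Fin.cases <;> simp [D] <;> ring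

lemma T_eq_integral_perspective (g : (Fin (M + 1) → ℝ) → ℝ) :
    S.T g = fun π => ∫ x, perspective g (S.Dlin x π) ∂S.m :=
  rfl

lemma ν_le_one (j : Fin M) : S.ν j ≤ 1 :=
  S.hνsum ▸ single_le_sum (fun i _ => (S.hν i).le) (mem_univ j)

lemma Dlin_nonneg {π : Fin (M + 1) → ℝ} (hπ : π ∈ Δ) (x : E) : 0 ≤ S.Dlin x π := by
  intro i
  induction i using Fin.cases with
  | zero => exact mul_nonneg (mul_nonneg (by linarith [S.hp.2]) (hπ.1 0)) (S.hf_nonneg 0 x)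
  | succ j =>
    exact mul_nonneg (add_nonneg (hπ.1 _)
      (mul_nonneg (mul_nonneg (hπ.1 0) S.hp.1.le) (S.hν j).le)) (S.hf_nonneg _ x)

lemma Dlin_le {π : Fin (M + 1) → ℝ} (hπ : π ∈ Δ) (x : E) (i : Fin (M + 1)) :
    S.Dlin x π i ≤ S.f i x := by
  obtain ⟨h₀, h₁⟩ := mem_Icc_of_mem_stdSimplex hπ 0
  obtain ⟨hp₀, hp₁⟩ := S.hp
  induction i using Fin.cases with
  | zero => exact mul_le_of_le_one_left (S.hf_nonneg 0 x) (by nlinarith)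
  | succ j =>
    have hpν : S.p * S.ν j ≤ 1 := mul_le_one₀ hp₁.le (S.hν j).le (S.ν_le_one j)
    have hsum : π 0 + π j.succ ≤ 1 :=
      hπ.2 ▸ add_le_sum (fun i _ => hπ.1 i) (mem_univ _) (mem_univ _) (Fin.succ_ne_zero j).symm
    exact mul_le_of_le_one_left (S.hf_nonneg _ x) (by nlinarith)

lemma measurable_Dlin (π : Fin (M + 1) → ℝ) : Measurable fun x => S.Dlin x π := by
  refine measurable_pi_lambda _ fun i => ?_
  induction i using Fin.cases with
  | zero => exact (S.hf_meas 0).const_mul _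
  | succ j => exact (S.hf_meas j.succ).const_mul _

lemma integrable_f (i : Fin (M + 1)) : Integrable (S.f i) S.m :=
  Integrable.of_integral_ne_zero (by rw [S.hf_int i]; exact one_ne_zero)

lemma norm_perspective_Dlin_le {g : (Fin (M + 1) → ℝ) → ℝ} {C : ℝ} (hC : ∀ π ∈ Δ, ‖g π‖ ≤ C)
    {π : Fin (M + 1) → ℝ} (hπ : π ∈ Δ) (x : E) :
    ‖perspective g (S.Dlin x π)‖ ≤ C * ∑ i, S.f i x := by
  have hC₀ : 0 ≤ C := (norm_nonneg _).trans (hC _ (single_mem_stdSimplex ℝ 0))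
  exact (norm_perspective_le hC (S.Dlin_nonneg hπ x)).trans
    (mul_le_mul_of_nonneg_left (sum_le_sum fun i _ => S.Dlin_le hπ x i) hC₀)

lemma aestronglyMeasurable_perspective_Dlin {g : (Fin (M + 1) → ℝ) → ℝ} (hg : ContinuousOn g Δ)
    {π : Fin (M + 1) → ℝ} (hπ : π ∈ Δ) :
    AEStronglyMeasurable (fun x => perspective g (S.Dlin x π)) S.m :=
  ((continuousOn_perspective hg).domRestrict.measurable.comp
    ((S.measurable_Dlin π).subtype_mk (h := fun x => S.Dlin_nonneg hπ x))).aestronglyMeasurable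

lemma integrable_perspective_Dlin {g : (Fin (M + 1) → ℝ) → ℝ} (hg : ContinuousOn g Δ)
    {π : Fin (M + 1) → ℝ} (hπ : π ∈ Δ) :
    Integrable (fun x => perspective g (S.Dlin x π)) S.m := by
  obtain ⟨C, hC⟩ := (isCompact_stdSimplex ℝ _).exists_bound_of_continuousOn hg
  exact ((integrable_finsetSum _ fun i _ => S.integrable_f i).const_mul C).mono'
    (S.aestronglyMeasurable_perspective_Dlin hg hπ)
    (ae_of_all _ (S.norm_perspective_Dlin_le hC hπ))

lemma continuousOn_T {g : (Fin (M + 1) → ℝ) → ℝ} (hg : ContinuousOn g Δ) :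
    ContinuousOn (S.T g) Δ := by
  obtain ⟨C, hC⟩ := (isCompact_stdSimplex ℝ _).exists_bound_of_continuousOn hg
  rw [T_eq_integral_perspective]
  intro π hπ
  exact continuousWithinAt_of_dominated
    (eventually_nhdsWithin_of_forall fun π' hπ' => S.aestronglyMeasurable_perspective_Dlin hg hπ')
    (eventually_nhdsWithin_of_forall fun π' hπ' =>
      ae_of_all _ (S.norm_perspective_Dlin_le hC hπ'))
    ((integrable_finsetSum _ fun i _ => S.integrable_f i).const_mul C)
    (ae_of_all _ fun x => ((continuousOn_perspective hg).comp
      (S.Dlin x).continuous_of_finiteDimensional.continuousOn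
      fun π' hπ' => S.Dlin_nonneg hπ' x) π hπ)

lemma concaveOn_T {g : (Fin (M + 1) → ℝ) → ℝ} (hg : ContinuousOn g Δ)
    (hgc : ConcaveOn ℝ Δ g) : ConcaveOn ℝ Δ (S.T g) := by
  rw [T_eq_integral_perspective]
  exact concaveOn_integral (convex_stdSimplex ℝ _)
    (ae_of_all _ fun x => ((concaveOn_perspective hgc).comp_linearMap (S.Dlin x)).subset
      (fun _ hπ => S.Dlin_nonneg hπ x) (convex_stdSimplex ℝ _))
    fun _ hπ => S.integrable_perspective_Dlin hg hπ

lemma T_nonneg {g : (Fin (M + 1) → ℝ) → ℝ} (hg : ∀ π ∈ Δ, 0 ≤ g π)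
    {π : Fin (M + 1) → ℝ} (hπ : π ∈ Δ) : 0 ≤ S.T g π := by
  rw [T_eq_integral_perspective]
  exact integral_nonneg fun x => perspective_nonneg hg (S.Dlin_nonneg hπ x)

lemma T_mono {g₁ g₂ : (Fin (M + 1) → ℝ) → ℝ} (hg₁ : ContinuousOn g₁ Δ) (hg₂ : ContinuousOn g₂ Δ)
    (hle : ∀ π ∈ Δ, g₁ π ≤ g₂ π) {π : Fin (M + 1) → ℝ} (hπ : π ∈ Δ) : S.T g₁ π ≤ S.T g₂ π := by
  rw [T_eq_integral_perspective, T_eq_integral_perspective]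
  exact integral_mono (S.integrable_perspective_Dlin hg₁ hπ)
    (S.integrable_perspective_Dlin hg₂ hπ) fun x => perspective_mono hle (S.Dlin_nonneg hπ x)

lemma hmin_nonneg {π : Fin (M + 1) → ℝ} (hπ : π ∈ Δ) : 0 ≤ S.hmin π :=
  Real.iInf_nonneg fun j => sum_nonneg fun i _ => mul_nonneg (hπ.1 i) (S.ha i j)

lemma continuous_hmin : Continuous S.hmin := by
  have : Nonempty (Fin M) := ⟨⟨0, S.hM⟩⟩
  have h : S.hmin = fun π => univ.inf' univ_nonempty fun j => S.hj j π :=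
    funext fun π => (inf'_univ_eq_ciInf _).symm
  rw [h]
  exact Continuous.finset_inf'_apply univ_nonempty fun j _ => by unfold hj; fun_prop

lemma concaveOn_hmin : ConcaveOn ℝ Set.univ S.hmin := by
  have : Nonempty (Fin M) := ⟨⟨0, S.hM⟩⟩
  refine ⟨convex_univ, fun π _ π' _ a b ha hb _ => le_ciInf fun j => ?_⟩
  have hj_comb : S.hj j (a • π + b • π') = a * S.hj j π + b * S.hj j π' := by
    simp only [hj, Pi.add_apply, Pi.smul_apply, smul_eq_mul, mul_sum, ← sum_add_distrib]
    exact sum_congr rfl fun i _ => by ring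
  rw [smul_eq_mul, smul_eq_mul, hj_comb]
  gcongr <;> exact ciInf_le (Finite.bddBelow_range _) j

lemma Mop_nonneg {g : (Fin (M + 1) → ℝ) → ℝ} (hg : ∀ π ∈ Δ, 0 ≤ g π)
    {π : Fin (M + 1) → ℝ} (hπ : π ∈ Δ) : 0 ≤ S.Mop g π :=
  le_min (S.hmin_nonneg hπ) (add_nonneg
    (mul_nonneg S.hc.le (sub_nonneg.2 (mem_Icc_of_mem_stdSimplex hπ 0).2)) (S.T_nonneg hg hπ))

lemma continuousOn_Mop {g : (Fin (M + 1) → ℝ) → ℝ} (hg : ContinuousOn g Δ) :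
    ContinuousOn (S.Mop g) Δ :=
  ContinuousOn.inf S.continuous_hmin.continuousOn
    ((by fun_prop : Continuous fun π : Fin (M + 1) → ℝ => S.c * (1 - π 0)).continuousOn.add
      (S.continuousOn_T hg))

lemma concaveOn_Mop {g : (Fin (M + 1) → ℝ) → ℝ} (hg : ContinuousOn g Δ)
    (hgc : ConcaveOn ℝ Δ g) : ConcaveOn ℝ Δ (S.Mop g) := by
  have hdelay : ConcaveOn ℝ Δ fun π => S.c * (1 - π 0) := by
    refine ⟨convex_stdSimplex ℝ _, fun π _ π' _ a b _ _ hab => le_of_eq ?_⟩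
    simp only [smul_eq_mul, Pi.add_apply, Pi.smul_apply]
    linear_combination S.c * hab
  exact (S.concaveOn_hmin.subset (Set.subset_univ _) (convex_stdSimplex ℝ _)).inf
    (hdelay.add (S.concaveOn_T hg hgc))

lemma Mop_mono {g₁ g₂ : (Fin (M + 1) → ℝ) → ℝ} (hg₁ : ContinuousOn g₁ Δ)
    (hg₂ : ContinuousOn g₂ Δ) (hle : ∀ π ∈ Δ, g₁ π ≤ g₂ π) {π : Fin (M + 1) → ℝ}
    (hπ : π ∈ Δ) : S.Mop g₁ π ≤ S.Mop g₂ π :=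
  min_le_min le_rfl (add_le_add le_rfl (S.T_mono hg₁ hg₂ hle hπ))

lemma V_succ (N : ℕ) : S.V (N + 1) = S.Mop (S.V N) :=
  Function.iterate_succ_apply' _ _ _

lemma V_nonneg (N : ℕ) : ∀ π ∈ Δ, 0 ≤ S.V N π := by
  induction N with
  | zero => exact fun π hπ => S.hmin_nonneg hπ
  | succ N ih => exact fun π hπ => S.V_succ N ▸ S.Mop_nonneg ih hπ

lemma continuousOn_V (N : ℕ) : ContinuousOn (S.V N) Δ := by
  induction N with
  | zero => exact S.continuous_hmin.continuousOn
  | succ N ih => exact S.V_succ N ▸ S.continuousOn_Mop ih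

lemma concaveOn_V (N : ℕ) : ConcaveOn ℝ Δ (S.V N) := by
  induction N with
  | zero => exact S.concaveOn_hmin.subset (Set.subset_univ _) (convex_stdSimplex ℝ _)
  | succ N ih => exact S.V_succ N ▸ S.concaveOn_Mop (S.continuousOn_V N) ih

lemma V_succ_le (N : ℕ) : ∀ π ∈ Δ, S.V (N + 1) π ≤ S.V N π := by
  induction N with
  | zero => exact fun π _ => S.V_succ 0 ▸ min_le_left _ _
  | succ N ih =>
    intro π hπ
    simpa only [← S.V_succ] using
      S.Mop_mono (S.continuousOn_V (N + 1)) (S.continuousOn_V N) ih hπ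

lemma antitone_V {π : Fin (M + 1) → ℝ} (hπ : π ∈ Δ) : Antitone fun N => S.V N π :=
  antitone_nat_of_succ_le fun N => S.V_succ_le N π hπ

end DiagSetup

/-- the limit value function `V₀ = lim_N 𝕄^N h` is a continuous
nonnegative function on the whole simplex `S^M` (boundary included). -/
theorem value_function_continuous {E : Type*} [MeasurableSpace E] {M : ℕ}
    (S : DiagSetup E M) (V0 : (Fin (M + 1) → ℝ) → ℝ)
    (hV0 : ∀ π ∈ stdSimplex ℝ (Fin (M + 1)),
      Tendsto (fun N => S.V N π) atTop (nhds (V0 π))) :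
    ContinuousOn V0 (stdSimplex ℝ (Fin (M + 1))) ∧
    ∀ π ∈ stdSimplex ℝ (Fin (M + 1)), 0 ≤ V0 π := by
  have hle : ∀ N, ∀ π ∈ stdSimplex ℝ (Fin (M + 1)), V0 π ≤ S.V N π :=
    fun N π hπ => (S.antitone_V hπ).le_of_tendsto (hV0 π hπ) N
  have hnonneg : ∀ π ∈ stdSimplex ℝ (Fin (M + 1)), 0 ≤ V0 π :=
    fun π hπ => ge_of_tendsto' (hV0 π hπ) fun N => S.V_nonneg N π hπ
  have hconc : ConcaveOn ℝ (stdSimplex ℝ (Fin (M + 1))) V0 := concaveOn_of_tendsto S.concaveOn_V hV0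
  refine ⟨fun π hπ => continuousWithinAt_iff_lower_upperSemicontinuousWithinAt.2 ⟨?_, ?_⟩, hnonneg⟩
  · exact hconc.lowerSemicontinuousWithinAt_stdSimplex hnonneg hπ
  · exact upperSemicontinuousWithinAt_of_tendsto_of_le
      (fun N => (S.continuousOn_V N π hπ).upperSemicontinuousWithinAt) hle (hV0 π hπ)
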